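/- Let 𝔳 = {ν_i}_{i∈I} be a totally ordered set in V with no maximal element such that at least one polynomial is not 𝔳-stable. Let Q be a monic polynomial of smallest degree d that is not 𝔳-stable, take γ ∈ Γ ∪ {∞} with γ > ν_i(Q) for every i ∈ I, and let μ be the valuation defined by μ(f_0 + f_1 Q + … + f_r Q^r) = min_{0≤j≤r} {𝔳(f_j) + jγ} on Q-expansions. Let R_Q be the additive subgroup of G_μ generated by {inv_μ(f) : deg(f) < d}. Then the direct limit lim→ G_{ν_i} of the direct system {(G_{ν_i}, φ_{ij})}_{i≤j} is isomorphic to R_Q as commutative rings with unity. -/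

import Mathlib

/-!
Every `ν_i` is bounded by `μ`, and a value `ν_i(f) < μ(f)` is exceeded later in the chain: otherwise
the division of `f` by `Q` would make `Q` stable. The compatible maps `φ : G_{ν_i} → G_μ` therefore
induce an injective ring map `lim→ G_{ν_i} → G_μ`, whose image is the additive group generated by
the `inv_μ(f)` with `ν_i(f) = μ(f)` for some `i`. For such `f`, `inv_μ(f) = inv_μ(f %ₘ Q)` since the
`Q`-part of `f` has larger `μ`-value; conversely a polynomial of degree `< deg Q` has `ν_i(f) = μ(f)`
for large `i`. So the image is `R_Q`.
-/

open Polynomial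

/-- An additive valuation (possibly with nontrivial support) on a commutative
ring `R`, with values in `Γ ∪ {∞}`. -/
structure ValOn (R : Type*) [CommRing R] (Γ : Type*) [AddCommGroup Γ] [LinearOrder Γ] [IsOrderedAddMonoid Γ] where
  v : R → WithTop Γ
  v_zero : v 0 = ⊤
  v_one : v 1 = 0
  v_mul : ∀ a b, v (a * b) = v a + v b
  min_le_v_add : ∀ a b, min (v a) (v b) ≤ v (a + b)

namespace ValOn

variable {R : Type*} [CommRing R] {Γ : Type*} [AddCommGroup Γ] [LinearOrder Γ] [IsOrderedAddMonoid Γ]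

theorem v_neg (w : ValOn R Γ) (a : R) : w.v (-a) = w.v a := by
  have h1 : w.v (-1) + w.v (-1) = 0 := by
    rw [← w.v_mul]; norm_num [w.v_one]
  have h2 : w.v (-1) = 0 := by
    cases hx : w.v (-1) with
    | top => rw [hx] at h1; simp at h1
    | coe x =>
        rw [hx, ← WithTop.coe_add, ← WithTop.coe_zero, WithTop.coe_inj] at h1
        have hx0 : x = 0 := by
          rcases lt_trichotomy x 0 with hc | hc | hc
          · exact absurd h1 (ne_of_lt (add_neg hc hc))
          · exact hc
          · exact absurd h1 (ne_of_gt (add_pos hc hc))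
        rw [hx0, WithTop.coe_zero]
  calc w.v (-a) = w.v (-1 * a) := by rw [neg_one_mul]
  _ = w.v a := by rw [w.v_mul, h2, zero_add]

theorem le_v_sum (w : ValOn R Γ) {α : Type*} {γ : WithTop Γ} (s : Finset α) (h : α → R)
    (H : ∀ t ∈ s, γ ≤ w.v (h t)) : γ ≤ w.v (∑ t ∈ s, h t) := by
  classical
  induction s using Finset.induction_on with
  | empty => simp [w.v_zero]
  | insert _ _ hx ih =>
      rw [Finset.sum_insert hx]
      refine le_trans ?_ (w.min_le_v_add _ _)
      rw [le_min_iff]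
      exact ⟨H _ (Finset.mem_insert_self _ _),
        ih fun t ht => H t (Finset.mem_insert_of_mem ht)⟩

theorem lt_v_sum (w : ValOn R Γ) {α : Type*} {γ : WithTop Γ} (hγ : γ ≠ ⊤) (s : Finset α)
    (h : α → R) (H : ∀ t ∈ s, γ < w.v (h t)) : γ < w.v (∑ t ∈ s, h t) := by
  classical
  induction s using Finset.induction_on with
  | empty => simp [w.v_zero]; exact lt_top_iff_ne_top.mpr hγ
  | insert _ _ hx ih =>
      rw [Finset.sum_insert hx]
      refine lt_of_lt_of_le ?_ (w.min_le_v_add _ _)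
      rw [lt_min_iff]
      exact ⟨H _ (Finset.mem_insert_self _ _),
        ih fun t ht => H t (Finset.mem_insert_of_mem ht)⟩

/-- The subring `⊕_{γ ∈ Γ} P_γ` of the monoid algebra `R[Γ]`, where
`P_γ = {f : γ ≤ v f}`.  The graded ring `G_v = ⊕_γ P_γ/P_γ⁺` is realized below as the
quotient of this subring by the ideal `⊕_γ P_γ⁺`. -/
def gradedCarrier (w : ValOn R Γ) : Subring (AddMonoidAlgebra R Γ) where
  carrier := {s | ∀ γ : Γ, (γ : WithTop Γ) ≤ w.v (s.coeff γ)}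
  zero_mem' := by intro γ; simp [w.v_zero]
  one_mem' := by
    intro γ
    classical
    show (γ : WithTop Γ) ≤ w.v ((AddMonoidAlgebra.single (0:Γ) (1:R)).coeff γ)
    rw [AddMonoidAlgebra.coeff_single_apply]
    split_ifs with h
    · subst h; simp [w.v_one]
    · simp [w.v_zero]
  add_mem' := by
    intro a b ha hb γ
    refine le_trans ?_ (w.min_le_v_add _ _)
    exact le_min (ha γ) (hb γ)
  neg_mem' := by
    intro a ha γ
    show (γ : WithTop Γ) ≤ w.v ((-a).coeff γ)
    rw [AddMonoidAlgebra.coeff_neg, Finsupp.neg_apply, w.v_neg]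
    exact ha γ
  mul_mem' := by
    classical
    intro a b ha hb γ
    rw [AddMonoidAlgebra.mul_apply]
    rw [Finsupp.sum]
    refine w.le_v_sum _ _ (fun α hα => ?_)
    rw [Finsupp.sum]
    refine w.le_v_sum _ _ (fun β hβ => ?_)
    split_ifs with h
    · subst h
      rw [w.v_mul, WithTop.coe_add]
      exact add_le_add (ha α) (hb β)
    · simp [w.v_zero]

/-- The ideal `⊕_{γ ∈ Γ} P_γ⁺` of `gradedCarrier w`. -/
def gradedIdeal (w : ValOn R Γ) : Ideal (gradedCarrier w) where
  carrier := {s | ∀ γ : Γ, (γ : WithTop Γ) < w.v ((s : AddMonoidAlgebra R Γ).coeff γ)}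
  zero_mem' := by intro γ; simp [w.v_zero]
  add_mem' := by
    intro a b ha hb γ
    refine lt_of_lt_of_le ?_ (w.min_le_v_add _ _)
    exact lt_min (ha γ) (hb γ)
  smul_mem' := by
    classical
    intro c x hx γ
    rw [smul_eq_mul]
    show (γ : WithTop Γ) < w.v (((c : AddMonoidAlgebra R Γ) * (x : AddMonoidAlgebra R Γ)).coeff γ)
    rw [AddMonoidAlgebra.mul_apply, Finsupp.sum]
    refine w.lt_v_sum (WithTop.coe_ne_top) _ _ (fun α hα => ?_)
    rw [Finsupp.sum]
    refine w.lt_v_sum (WithTop.coe_ne_top) _ _ (fun β hβ => ?_)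
    split_ifs with h
    · subst h
      rw [w.v_mul, WithTop.coe_add]
      exact WithTop.add_lt_add_of_le_of_lt WithTop.coe_ne_top (c.2 α) (hx β)
    · simp [w.v_zero]
end ValOn

/-- The graded ring `G_w = ⊕_{γ} P_γ/P_γ⁺` associated to the valuation `w`,
realized as a quotient. -/
abbrev Graded {R : Type*} [CommRing R] {Γ : Type*} [AddCommGroup Γ] [LinearOrder Γ] [IsOrderedAddMonoid Γ]
    (w : ValOn R Γ) : Type _ :=
  (ValOn.gradedCarrier w) ⧸ (ValOn.gradedIdeal w)

namespace ValOn

variable {R : Type*} [CommRing R] {Γ : Type*} [AddCommGroup Γ] [LinearOrder Γ] [IsOrderedAddMonoid Γ]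

/-- `inv_w f`, the initial form (image of `f` in the homogeneous component
`P_{v f}/P_{v f}⁺` of the graded ring), with `inv_w f = 0` when `f ∈ supp w`. -/
noncomputable def initialForm (w : ValOn R Γ) (f : R) : Graded w :=
  if h : w.v f = ⊤ then 0
  else Ideal.Quotient.mk (gradedIdeal w)
    ⟨AddMonoidAlgebra.single ((w.v f).untop h) f, by
      intro γ
      classical
      show (γ : WithTop Γ) ≤ w.v ((AddMonoidAlgebra.single ((w.v f).untop h) f).coeff γ)
      rw [AddMonoidAlgebra.coeff_single_apply]
      split_ifs with hh
      · rw [← hh, WithTop.coe_untop]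
      · simp [w.v_zero]⟩

theorem gradedCarrier_mono {w₁ w₂ : ValOn R Γ} (h : ∀ f, w₁.v f ≤ w₂.v f) :
    gradedCarrier w₁ ≤ gradedCarrier w₂ :=
  fun s hs γ => (hs γ).trans (h _)

/-- The homomorphism `φ : G_{w₁} → G_{w₂}` of graded rings, for `w₁ ≤ w₂`:
it sends `inv_{w₁} f` to `inv_{w₂} f` if `w₁ f = w₂ f` and to `0` if `w₁ f < w₂ f`. -/
noncomputable def phi (w₁ w₂ : ValOn R Γ) (h : ∀ f, w₁.v f ≤ w₂.v f) :
    Graded w₁ →+* Graded w₂ :=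
  Ideal.Quotient.lift (gradedIdeal w₁)
    ((Ideal.Quotient.mk (gradedIdeal w₂)).comp (Subring.inclusion (gradedCarrier_mono h)))
    (by
      intro a ha
      rw [RingHom.comp_apply, Ideal.Quotient.eq_zero_iff_mem]
      exact fun γ => lt_of_lt_of_le (ha γ) (h _))

end ValOn

open ValOn

section PolyDefs

variable {K : Type*} [Field K] {Γ : Type*} [AddCommGroup Γ] [LinearOrder Γ] [IsOrderedAddMonoid Γ]

/-- A polynomial `f` is `𝔳`-stable for a family `𝔳 = (ν_i)_{i ∈ I}` if the values `ν_i(f)`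
eventually stabilize. -/
def Stable {I : Type*} [Preorder I] (ν : I → ValOn (Polynomial K) Γ) (f : Polynomial K) : Prop :=
  ∃ i : I, ∀ j : I, i ≤ j → (ν j).v f = (ν i).v f

/-- The truncation `w_q` of `w` at `q`:
`w_q(f) = min_j w(f_j q^j)` where `f = ∑ f_j q^j` is the `q`-expansion of `f`
(for monic non-constant `q`, the `j`-th coefficient of the `q`-expansion is
`(f /ₘ q^j) %ₘ q`, and all the nonzero coefficients occur for `j ≤ natDegree f`). -/
noncomputable def truncVal (w : ValOn (Polynomial K) Γ) (q f : Polynomial K) : WithTop Γ :=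
  (Finset.range (f.natDegree + 1)).inf' Finset.nonempty_range_add_one
    (fun j => w.v (((f /ₘ q ^ j) %ₘ q) * q ^ j))

/-- `δ(f) = max {ν̄(x - a) : a a root of f}` for a polynomial over an algebraically closed
field, with the convention `δ(f) = ⊥ = -∞` when `f` has no roots (e.g. `deg f = 0`). -/
noncomputable def deltaOf {F : Type*} [Field F] (wbar : ValOn (Polynomial F) Γ)
    (f : Polynomial F) : WithBot (WithTop Γ) :=
  (f.roots.map (fun a => ((wbar.v (X - C a) : WithTop Γ) : WithBot (WithTop Γ)))).sup

/-- `δ(f)` of `f ∈ K[x]`, computed via the fixed extension `ν̄` of `ν` to `K̄[x]`. -/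
noncomputable def delta (wbar : ValOn (Polynomial (AlgebraicClosure K)) Γ)
    (f : Polynomial K) : WithBot (WithTop Γ) :=
  deltaOf wbar (f.map (algebraMap K (AlgebraicClosure K)))

/-- `Q` is a key polynomial (of level `δ(Q)`) for the valuation `ν` (with fixed extension
`ν̄` to `K̄[x]`): `Q` is monic and `δ(f) ≥ δ(Q) → deg f ≥ deg Q` for every nonzero `f`. -/
def IsKeyPoly (wbar : ValOn (Polynomial (AlgebraicClosure K)) Γ) (Q : Polynomial K) : Prop :=
  Q.Monic ∧ ∀ f : Polynomial K, f ≠ 0 → delta wbar Q ≤ delta wbar f → Q.degree ≤ f.degree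

/-- `Ψ_n`: the set of key polynomials of degree `n`. -/
def Psi (wbar : ValOn (Polynomial (AlgebraicClosure K)) Γ) (n : ℕ) : Set (Polynomial K) :=
  {Q | IsKeyPoly wbar Q ∧ Q.natDegree = n}

/-- The set `K_n = {f : ν_Q(f) < ν(f) for all Q ∈ Ψ_n}`. -/
def LimitSet (w : ValOn (Polynomial K) Γ) (wbar : ValOn (Polynomial (AlgebraicClosure K)) Γ)
    (n : ℕ) : Set (Polynomial K) :=
  {f | ∀ Q ∈ Psi wbar n, truncVal w Q f < w.v f}

/-- A limit key polynomial for `Ψ_n`: a monic polynomial in `K_n` of least degree. -/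
def IsLimitKeyPoly (w : ValOn (Polynomial K) Γ)
    (wbar : ValOn (Polynomial (AlgebraicClosure K)) Γ) (n : ℕ) (Qn : Polynomial K) : Prop :=
  Qn.Monic ∧ Qn ∈ LimitSet w wbar n ∧ ∀ g ∈ LimitSet w wbar n, Qn.degree ≤ g.degree

/-- `g` is `𝔳`-stable for the family `𝔳 = (ν_Q)_{Q ∈ Ψ_n}`, ordered by `Q ⪯ Q' ↔ ν_Q ≤ ν_{Q'}`. -/
def PsiStable (w : ValOn (Polynomial K) Γ) (wbar : ValOn (Polynomial (AlgebraicClosure K)) Γ)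
    (n : ℕ) (g : Polynomial K) : Prop :=
  ∃ Q ∈ Psi wbar n, ∀ Q' ∈ Psi wbar n,
    (∀ h : Polynomial K, truncVal w Q h ≤ truncVal w Q' h) → truncVal w Q' g = truncVal w Q g

/-- `v` is a Krull valuation: its support is trivial. -/
def IsKrullVal (v : Polynomial K → WithTop Γ) : Prop :=
  ∀ f : Polynomial K, f ≠ 0 → v f ≠ ⊤

/-- The quotient group `v(K[x])/ν₀K` is a torsion group: every value of `v` has a positive
multiple lying in the value group of `ν₀`. -/
def TorsionOverBase (ν₀ : ValOn K Γ) (v : Polynomial K → WithTop Γ) : Prop :=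
  ∀ f : Polynomial K, f ≠ 0 → ∃ m : ℕ, 0 < m ∧ ∃ a : K, a ≠ 0 ∧ m • v f = ν₀.v a

/-- `v` (a valuation on `K[x]` extending `ν₀`) is residue-transcendental: it is Krull and the
residue field extension `K(x)v ∣ Kν₀` is transcendental, i.e. there are `f, g` with
`v f = v g` whose residue `res(f/g)` is transcendental over `Kν₀`: every polynomial over
`Kν₀` (with coefficients `res(c_i)`, not all zero) does not vanish at `res(f/g)`. -/
def ResidueTranscendental (ν₀ : ValOn K Γ) (v : Polynomial K → WithTop Γ) : Prop :=
  IsKrullVal v ∧ ∃ f g : Polynomial K, f ≠ 0 ∧ g ≠ 0 ∧ v f = v g ∧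
    ∀ (n : ℕ) (c : ℕ → K), (∀ i, 0 ≤ ν₀.v (c i)) → (∃ i, i ≤ n ∧ ν₀.v (c i) = 0) →
      v (∑ i ∈ Finset.range (n + 1), Polynomial.C (c i) * f ^ i * g ^ (n - i)) = v (g ^ n)

/-- `v` is value-transcendental: it is not Krull, or `v(K[x])/ν₀K` is not torsion. -/
def ValueTranscendental (ν₀ : ValOn K Γ) (v : Polynomial K → WithTop Γ) : Prop :=
  ¬ IsKrullVal v ∨ ¬ TorsionOverBase ν₀ v

/-- `v` is valuation-transcendental. -/
def ValuationTranscendental (ν₀ : ValOn K Γ) (v : Polynomial K → WithTop Γ) : Prop :=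
  ValueTranscendental ν₀ v ∨ ResidueTranscendental ν₀ v

/-- `v` is valuation-algebraic. -/
def ValuationAlgebraic (ν₀ : ValOn K Γ) (v : Polynomial K → WithTop Γ) : Prop :=
  ¬ ValuationTranscendental ν₀ v

end PolyDefs

namespace ValOn

variable {R : Type*} [CommRing R] {Γ : Type*} [AddCommGroup Γ] [LinearOrder Γ]
  [IsOrderedAddMonoid Γ]

section Valuation

variable (w : ValOn R Γ)

theorem v_add_eq_left {a b : R} (h : w.v a < w.v b) : w.v (a + b) = w.v a := by
  refine le_antisymm ?_ ((le_min le_rfl h.le).trans (w.min_le_v_add a b))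
  by_contra! hlt
  have := w.min_le_v_add (a + b) (-b)
  rw [add_neg_cancel_right, w.v_neg] at this
  exact (lt_min hlt h).not_ge this

theorem v_eq_of_min_lt_v_add {a b : R} (h : min (w.v a) (w.v b) < w.v (a + b)) :
    w.v a = w.v b := by
  by_contra hne
  rcases lt_or_gt_of_ne hne with hab | hba
  · rw [w.v_add_eq_left hab, min_eq_left hab.le] at h
    exact h.false
  · rw [add_comm, w.v_add_eq_left hba, min_eq_right hba.le] at h
    exact h.false

theorem v_coeff_single (c γ : Γ) (f : R) :
    w.v ((AddMonoidAlgebra.single c f).coeff γ) = if c = γ then w.v f else ⊤ := by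
  rw [AddMonoidAlgebra.coeff_single, Finsupp.single_apply]
  split_ifs
  exacts [rfl, w.v_zero]

theorem single_mem_gradedCarrier {f : R} {c : Γ} (h : (c : WithTop Γ) ≤ w.v f) :
    AddMonoidAlgebra.single c f ∈ gradedCarrier w := by
  intro γ
  rw [v_coeff_single]
  split_ifs with hc
  exacts [hc ▸ h, le_top]

theorem mk_eq_zero_iff (s : gradedCarrier w) :
    Ideal.Quotient.mk (gradedIdeal w) s = 0 ↔
      ∀ c : Γ, (c : WithTop Γ) < w.v ((s : AddMonoidAlgebra R Γ).coeff c) :=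
  Ideal.Quotient.eq_zero_iff_mem

theorem mk_single_of_lt {f : R} {c : Γ} (h : (c : WithTop Γ) < w.v f)
    (hs : AddMonoidAlgebra.single c f ∈ gradedCarrier w) :
    Ideal.Quotient.mk (gradedIdeal w) ⟨_, hs⟩ = 0 := by
  refine (mk_eq_zero_iff w _).2 fun γ => ?_
  rw [v_coeff_single]
  split_ifs with hc
  exacts [hc ▸ h, WithTop.coe_lt_top γ]

theorem mk_single_of_eq {f : R} {c : Γ} (h : w.v f = c)
    (hs : AddMonoidAlgebra.single c f ∈ gradedCarrier w) :
    Ideal.Quotient.mk (gradedIdeal w) ⟨_, hs⟩ = initialForm w f := by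
  have htop : w.v f ≠ ⊤ := h ▸ WithTop.coe_ne_top
  rw [initialForm, dif_neg htop]
  congr
  exact ((WithTop.untop_eq_iff htop).2 h).symm

theorem initialForm_of_v_eq_top {f : R} (h : w.v f = ⊤) : initialForm w f = 0 :=
  dif_pos h

theorem initialForm_eq_of_v_lt_v_sub {f g : R} (hfg : w.v f = w.v g) (h : w.v f < w.v (f - g)) :
    initialForm w f = initialForm w g := by
  obtain ⟨c, hc⟩ := WithTop.ne_top_iff_exists.1 (ne_top_of_lt h)
  have hmem {a : R} (ha : w.v a = c) := single_mem_gradedCarrier w ha.ge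
  have hg : w.v g = c := hfg.symm.trans hc.symm
  rw [← mk_single_of_eq w hc.symm (hmem hc.symm), ← mk_single_of_eq w hg (hmem hg),
    ← sub_eq_zero, ← map_sub]
  have : (⟨_, hmem hc.symm⟩ - ⟨_, hmem hg⟩ : gradedCarrier w) =
      ⟨_, single_mem_gradedCarrier w (hc ▸ h.le)⟩ :=
    Subtype.ext (AddMonoidAlgebra.single_sub c f g).symm
  rw [this, mk_single_of_lt w (hc ▸ h)]

theorem eq_sum_single (s : gradedCarrier w) :
    s = ∑ c ∈ (s : AddMonoidAlgebra R Γ).coeff.support,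
      ⟨_, single_mem_gradedCarrier w (s.2 c)⟩ := by
  refine Subtype.ext ?_
  rw [AddSubmonoidClass.coe_finset_sum]
  exact (AddMonoidAlgebra.sum_coeff_single _).symm

end Valuation

section GradedHom

variable (w₁ w₂ : ValOn R Γ) (h : ∀ f, w₁.v f ≤ w₂.v f)

theorem phi_mk (s : gradedCarrier w₁) :
    phi w₁ w₂ h (Ideal.Quotient.mk (gradedIdeal w₁) s) =
      Ideal.Quotient.mk (gradedIdeal w₂) (Subring.inclusion (gradedCarrier_mono h) s) :=
  Ideal.Quotient.lift_mk _ _ _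

theorem phi_mk_eq_zero_iff (s : gradedCarrier w₁) :
    phi w₁ w₂ h (Ideal.Quotient.mk (gradedIdeal w₁) s) = 0 ↔
      ∀ c : Γ, (c : WithTop Γ) < w₂.v ((s : AddMonoidAlgebra R Γ).coeff c) := by
  rw [phi_mk, mk_eq_zero_iff]
  rfl

theorem phi_phi {w₃ : ValOn R Γ} (h' : ∀ f, w₂.v f ≤ w₃.v f) (x : Graded w₁) :
    phi w₂ w₃ h' (phi w₁ w₂ h x) = phi w₁ w₃ (fun f => (h f).trans (h' f)) x := by
  obtain ⟨s, rfl⟩ := Ideal.Quotient.mk_surjective x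
  simp only [phi_mk]
  rfl

theorem phi_initialForm {f : R} (hf : w₁.v f = w₂.v f) :
    phi w₁ w₂ h (initialForm w₁ f) = initialForm w₂ f := by
  by_cases htop : w₁.v f = ⊤
  · rw [initialForm_of_v_eq_top w₁ htop, map_zero, initialForm_of_v_eq_top w₂ (hf ▸ htop)]
  obtain ⟨c, hc⟩ := WithTop.ne_top_iff_exists.1 htop
  rw [← mk_single_of_eq w₁ hc.symm (single_mem_gradedCarrier w₁ hc.le), phi_mk]
  exact mk_single_of_eq w₂ (hf ▸ hc.symm) _

theorem phi_mem_closure_initialForm (x : Graded w₁) :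
    phi w₁ w₂ h x ∈
      AddSubgroup.closure {y | ∃ f, w₁.v f = w₂.v f ∧ y = initialForm w₂ f} := by
  obtain ⟨s, rfl⟩ := Ideal.Quotient.mk_surjective x
  rw [eq_sum_single w₁ s, map_sum, map_sum]
  refine AddSubgroup.sum_mem _ fun c _ => ?_
  have hle : (c : WithTop Γ) ≤ w₂.v ((s : AddMonoidAlgebra R Γ).coeff c) := (s.2 c).trans (h _)
  rw [phi_mk]
  change Ideal.Quotient.mk _ (⟨_, single_mem_gradedCarrier w₂ hle⟩ : gradedCarrier w₂) ∈ _
  rcases hle.lt_or_eq with hlt | heq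
  · rw [mk_single_of_lt w₂ hlt]
    exact zero_mem _
  · refine AddSubgroup.subset_closure ⟨_, le_antisymm (h _) (heq ▸ s.2 c), ?_⟩
    exact mk_single_of_eq w₂ heq.symm _

end GradedHom

end ValOn

section DirectLimit

open Filter

variable {R : Type*} [CommRing R] {Γ : Type*} [AddCommGroup Γ] [LinearOrder Γ]
  [IsOrderedAddMonoid Γ] {ι : Type*} [Preorder ι] (ν : ι → ValOn R Γ) (μ : ValOn R Γ)

theorem eventually_lt_v (hmono : ∀ i j, i ≤ j → ∀ f, (ν i).v f ≤ (ν j).v f)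
    (hlim : ∀ f i, (ν i).v f < μ.v f → ∃ j, (ν i).v f < (ν j).v f)
    {f : R} {i : ι} {c : WithTop Γ} (hc : c ≤ (ν i).v f) (hcμ : c < μ.v f) :
    ∀ᶠ j in atTop, c < (ν j).v f := by
  rcases hc.lt_or_eq with hlt | rfl
  · exact (eventually_ge_atTop i).mono fun j hj => hlt.trans_le (hmono i j hj f)
  · obtain ⟨j, hj⟩ := hlim f i hcμ
    exact (eventually_ge_atTop j).mono fun k hk => hj.trans_le (hmono j k hk f)

variable (hmono : ∀ i j, i ≤ j → ∀ f, (ν i).v f ≤ (ν j).v f) (hle : ∀ i f, (ν i).v f ≤ μ.v f)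

noncomputable def limitHom :
    Ring.DirectLimit (fun i => Graded (ν i)) (fun i j h => ⇑(phi (ν i) (ν j) (hmono i j h))) →+*
      Graded μ :=
  Ring.DirectLimit.lift _ _ _ (fun i => phi (ν i) μ (hle i))
    fun i j hij x => phi_phi (ν i) (ν j) (hmono i j hij) (hle j) x

@[simp]
theorem limitHom_of (i : ι) (x : Graded (ν i)) :
    limitHom ν μ hmono hle (Ring.DirectLimit.of _ _ i x) = phi (ν i) μ (hle i) x :=
  Ring.DirectLimit.lift_of ..

variable [Nonempty ι] [IsDirectedOrder ι]

theorem range_limitHom :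
    (limitHom ν μ hmono hle).range.toAddSubgroup =
      AddSubgroup.closure {x | ∃ f i, (ν i).v f = μ.v f ∧ x = initialForm μ f} := by
  refine le_antisymm ?_ ((AddSubgroup.closure_le _).2 ?_)
  · rintro _ ⟨y, rfl⟩
    induction y using Ring.DirectLimit.induction_on with
    | ih i x =>
      rw [limitHom_of]
      refine AddSubgroup.closure_mono ?_ (phi_mem_closure_initialForm _ _ (hle i) x)
      rintro _ ⟨f, hf, rfl⟩
      exact ⟨f, i, hf, rfl⟩
  · rintro _ ⟨f, i, hf, rfl⟩
    exact ⟨_, (limitHom_of ν μ hmono hle i _).trans (phi_initialForm _ _ (hle i) hf)⟩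

theorem limitHom_injective (hlim : ∀ f i, (ν i).v f < μ.v f → ∃ j, (ν i).v f < (ν j).v f) :
    Function.Injective (limitHom ν μ hmono hle) := by
  refine (injective_iff_map_eq_zero _).2 fun y hy => ?_
  induction y using Ring.DirectLimit.induction_on with
  | ih i x =>
    obtain ⟨s, rfl⟩ := Ideal.Quotient.mk_surjective x
    rw [limitHom_of, phi_mk_eq_zero_iff] at hy
    set a := (s : AddMonoidAlgebra R Γ).coeff
    have hev : ∀ᶠ j in atTop, i ≤ j ∧ ∀ c ∈ a.support, (c : WithTop Γ) < (ν j).v (a c) :=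
      (eventually_ge_atTop i).and <| (eventually_all_finset _).2 fun c _ =>
        eventually_lt_v ν μ hmono hlim (s.2 c) (hy c)
    obtain ⟨j, hij, hj⟩ := hev.exists
    rw [← Ring.DirectLimit.of_f hij, (phi_mk_eq_zero_iff _ _ _ s).2, map_zero]
    intro c
    by_cases hc : c ∈ a.support
    · exact hj c hc
    · rw [Finsupp.notMem_support_iff.1 hc, (ν j).v_zero]
      exact WithTop.coe_lt_top c

end DirectLimit

section Expansion

open Finset

variable {A : Type*} [CommRing A] {Q : A[X]}

theorem sum_range_add_two_mul_pow (c : ℕ → A[X]) (r : ℕ) :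
    ∑ j ∈ range (r + 2), c j * Q ^ j = c 0 + Q * ∑ j ∈ range (r + 1), c (j + 1) * Q ^ j := by
  rw [sum_range_succ', mul_sum, pow_zero, mul_one, add_comm]
  exact congrArg (c 0 + ·) (sum_congr rfl fun j _ => by ring)

theorem inf'_range_add_two {α : Type*} [LinearOrder α] (F : ℕ → α) (r : ℕ) :
    (range (r + 2)).inf' nonempty_range_add_one F =
      min (F 0) ((range (r + 1)).inf' nonempty_range_add_one fun k => F (k + 1)) := by
  rw [inf'_congr _ (range_add_one' (r + 1)) fun _ _ => rfl,
    inf'_insert nonempty_range_add_one.map _, inf'_map]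
  rfl

theorem exists_expansion_add_mul {c₀ g : A[X]} {r : ℕ} {b : ℕ → A[X]}
    (hc₀ : c₀.degree < Q.degree) (hb : ∀ k, (b k).degree < Q.degree)
    (hg : g = ∑ j ∈ range (r + 1), b j * Q ^ j) :
    ∃ c : ℕ → A[X], c 0 = c₀ ∧ (∀ k, c (k + 1) = b k) ∧ (∀ j, (c j).degree < Q.degree) ∧
      c₀ + Q * g = ∑ j ∈ range (r + 2), c j * Q ^ j := by
  refine ⟨fun j => Nat.rec c₀ (fun k _ => b k) j, rfl, fun _ => rfl, fun j => ?_, ?_⟩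
  · cases j
    exacts [hc₀, hb _]
  · rw [sum_range_add_two_mul_pow, hg]
    rfl

theorem exists_expansion [Nontrivial A] (hQ : Q.Monic) (hd : 0 < Q.natDegree) (f : A[X]) :
    ∃ (r : ℕ) (b : ℕ → A[X]), (∀ k, (b k).degree < Q.degree) ∧
      f = ∑ j ∈ range (r + 1), b j * Q ^ j := by
  induction h : f.natDegree using Nat.strong_induction_on generalizing f with
  | _ n ih =>
  by_cases hf : f.degree < Q.degree
  · exact ⟨0, fun _ => f, fun _ => hf, by simp⟩
  have hlt : (f /ₘ Q).natDegree < n := by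
    have hdeg := natDegree_le_natDegree (not_lt.1 hf)
    rw [natDegree_divByMonic f hQ]
    omega
  obtain ⟨r, b, hb, hg⟩ := ih _ hlt (f /ₘ Q) rfl
  obtain ⟨c, -, -, hc, hsum⟩ := exists_expansion_add_mul (degree_modByMonic_lt f hQ) hb hg
  exact ⟨r + 1, c, hc, by rw [← hsum, modByMonic_add_div]⟩

end Expansion

section Stability

open Filter

variable {K : Type*} [Field K] {Γ : Type*} [AddCommGroup Γ] [LinearOrder Γ] [IsOrderedAddMonoid Γ]
  {ι : Type*} [Preorder ι] {ν : ι → ValOn K[X] Γ}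

theorem stable_one [Nonempty ι] : Stable ν 1 :=
  ⟨Classical.arbitrary ι, fun j _ => by rw [(ν j).v_one, (ν _).v_one]⟩

/-- Both `ν_j(f)` and `ν_j(g)` are monotone in `j`, so a finite eventually constant sum of the
two forces each of them to be eventually constant. -/
theorem stable_of_eventually_v_mul_eq [Nonempty ι] [IsDirectedOrder ι]
    (hmono : ∀ i j, i ≤ j → ∀ f, (ν i).v f ≤ (ν j).v f)
    {f g : K[X]} {c : WithTop Γ} (hc : c ≠ ⊤) (h : ∀ᶠ j in atTop, (ν j).v (f * g) = c) :
    Stable ν f := by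
  obtain ⟨i, hi⟩ := eventually_atTop.1 h
  refine ⟨i, fun j hij => (le_antisymm (hmono i j hij f) ?_).symm⟩
  by_contra! hlt
  have hg : (ν i).v g ≠ ⊤ := fun hg => hc (by rw [← hi i le_rfl, (ν i).v_mul, hg, add_top])
  have := WithTop.add_lt_add_of_lt_of_le hg hlt (hmono i j hij g)
  rw [← (ν i).v_mul, ← (ν j).v_mul, hi i le_rfl, hi j hij] at this
  exact this.false

end Stability

section LimitAugmentation

open Filter Finset

variable {K : Type*} [Field K] {Γ : Type*} [AddCommGroup Γ] [LinearOrder Γ] [IsOrderedAddMonoid Γ]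
  {ι : Type*} [Preorder ι]

/-- `μ = [𝔳; Q, γ]`. In `v_expansion`, `𝔳(f_j)` of the formula `μ(∑ f_j Q^j) = min_j (𝔳(f_j) + jγ)`
is read as the eventual value of `ν_i(f_j)`. -/
structure IsLimitAugmentation (ν : ι → ValOn K[X] Γ) (Q : K[X]) (γ : WithTop Γ)
    (μ : ValOn K[X] Γ) : Prop where
  mono : ∀ i j, i ≤ j → ∀ f, (ν i).v f ≤ (ν j).v f
  monic : Q.Monic
  not_stable : ¬ Stable ν Q
  v_Q_lt : ∀ i, (ν i).v Q < γ
  v_expansion : ∀ (f : K[X]) (r : ℕ) (c : ℕ → K[X]), f = ∑ j ∈ range (r + 1), c j * Q ^ j →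
    (∀ j, (c j).degree < Q.degree) →
    ∃ i₀, ∀ i, i₀ ≤ i →
      μ.v f = (range (r + 1)).inf' nonempty_range_add_one (fun j => (ν i).v (c j) + j • γ)

namespace IsLimitAugmentation

variable {ν : ι → ValOn K[X] Γ} {Q : K[X]} {γ : WithTop Γ} {μ : ValOn K[X] Γ}

theorem eventually_v_eq_of_degree_lt (hμ : IsLimitAugmentation ν Q γ μ) {f : K[X]}
    (hf : f.degree < Q.degree) : ∀ᶠ i in atTop, μ.v f = (ν i).v f := by
  obtain ⟨i₀, h⟩ := hμ.v_expansion f 0 (fun _ => f) (by simp) fun _ => hf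
  exact (eventually_ge_atTop i₀).mono fun i hi => by simpa using h i hi

theorem natDegree_pos [Nonempty ι] (hμ : IsLimitAugmentation ν Q γ μ) : 0 < Q.natDegree :=
  hμ.monic.natDegree_pos.2 fun h => hμ.not_stable (h ▸ stable_one)

variable [Nonempty ι] [IsDirectedOrder ι]

theorem v_add_mul (hμ : IsLimitAugmentation ν Q γ μ) {c₀ : K[X]} (hc₀ : c₀.degree < Q.degree)
    (g : K[X]) :
    μ.v (c₀ + Q * g) = min (μ.v c₀) (γ + μ.v g) := by
  obtain ⟨r, b, hb, hg⟩ := exists_expansion hμ.monic hμ.natDegree_pos g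
  obtain ⟨c, hc0, hcs, hc, hsum⟩ := exists_expansion_add_mul hc₀ hb hg
  obtain ⟨i₀, h₀⟩ := hμ.v_expansion _ (r + 1) c hsum hc
  obtain ⟨i₁, h₁⟩ := hμ.v_expansion g r b hg hb
  obtain ⟨i, hi₀, hi₁, hi⟩ := ((eventually_ge_atTop i₀).and
    ((eventually_ge_atTop i₁).and (hμ.eventually_v_eq_of_degree_lt hc₀))).exists
  have hγ_add : Monotone (γ + ·) := fun _ _ h => add_le_add le_rfl h
  rw [h₀ i hi₀, h₁ i hi₁, hi, inf'_range_add_two,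
    apply_inf'_eq_inf'_comp _ _ fun _ _ => hγ_add.map_min]
  congr 1
  · simp [hc0]
  · refine inf'_congr _ rfl fun k _ => ?_
    simp only [Function.comp_apply, hcs, succ_nsmul]
    ac_rfl

theorem v_modByMonic_add_divByMonic (hμ : IsLimitAugmentation ν Q γ μ) (f : K[X]) :
    μ.v f = min (μ.v (f %ₘ Q)) (γ + μ.v (f /ₘ Q)) := by
  rw [← hμ.v_add_mul (degree_modByMonic_lt f hμ.monic), modByMonic_add_div]

theorem v_Q (hμ : IsLimitAugmentation ν Q γ μ) : μ.v Q = γ := by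
  have h0 : (0 : K[X]).degree < Q.degree := by
    rw [degree_zero]
    exact bot_lt_iff_ne_bot.2 (degree_ne_bot.2 hμ.monic.ne_zero)
  simpa [μ.v_zero, μ.v_one] using hμ.v_add_mul h0 1

/-- Since `Q` is not stable, the division `f = (f %ₘ Q) + Q * (f /ₘ Q)` cannot cancel at every
stage of the chain: otherwise `ν_j(Q * (f /ₘ Q)) = ν_j(f %ₘ Q)` would be eventually constant. -/
theorem exists_v_le_min (hμ : IsLimitAugmentation ν Q γ μ) (f : K[X]) (i : ι) :
    ∃ j, i ≤ j ∧ (ν j).v f ≤ min ((ν j).v (f %ₘ Q)) ((ν j).v (Q * (f /ₘ Q))) := by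
  by_contra! hcancel
  have heq (j) (hij : i ≤ j) : (ν j).v (f %ₘ Q) = (ν j).v (Q * (f /ₘ Q)) :=
    (ν j).v_eq_of_min_lt_v_add (by rw [modByMonic_add_div]; exact hcancel j hij)
  obtain ⟨j, hij, hj⟩ := ((eventually_ge_atTop i).and
    (hμ.eventually_v_eq_of_degree_lt (degree_modByMonic_lt f hμ.monic))).exists
  have hfin : μ.v (f %ₘ Q) ≠ ⊤ := by
    have := hcancel j hij
    rw [← heq j hij, min_self, ← hj] at this
    exact ne_top_of_lt this
  refine hμ.not_stable (stable_of_eventually_v_mul_eq hμ.mono (g := f /ₘ Q) hfin ?_)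
  filter_upwards [eventually_ge_atTop i,
    hμ.eventually_v_eq_of_degree_lt (degree_modByMonic_lt f hμ.monic)] with k hik hk
  rw [hk, heq k hik]

theorem v_le (hμ : IsLimitAugmentation ν Q γ μ) (i : ι) (f : K[X]) : (ν i).v f ≤ μ.v f := by
  induction h : f.natDegree using Nat.strong_induction_on generalizing f i with
  | _ n ih =>
  have hr := degree_modByMonic_lt f hμ.monic
  obtain ⟨j, hij, hj⟩ := hμ.exists_v_le_min f i
  obtain ⟨k, hjk, hk⟩ := ((eventually_ge_atTop j).and (hμ.eventually_v_eq_of_degree_lt hr)).exists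
  have hg : (ν j).v (f /ₘ Q) ≤ μ.v (f /ₘ Q) := by
    by_cases hf : f.degree < Q.degree
    · rw [(divByMonic_eq_zero_iff hμ.monic).2 hf, (ν j).v_zero, μ.v_zero]
    have hdeg := natDegree_le_natDegree (not_lt.1 hf)
    have hd := hμ.natDegree_pos
    refine ih _ ?_ j _ rfl
    rw [natDegree_divByMonic f hμ.monic]
    omega
  calc (ν i).v f ≤ (ν j).v f := hμ.mono i j hij f
    _ ≤ min ((ν j).v (f %ₘ Q)) ((ν j).v Q + (ν j).v (f /ₘ Q)) := by rwa [← (ν j).v_mul]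
    _ ≤ min (μ.v (f %ₘ Q)) (γ + μ.v (f /ₘ Q)) :=
      min_le_min ((hμ.mono j k hjk _).trans hk.ge) (add_le_add (hμ.v_Q_lt j).le hg)
    _ = μ.v f := (hμ.v_modByMonic_add_divByMonic f).symm

/-- If `ν_j(f)` stayed at `ν_i(f) < μ(f) ≤ μ(f %ₘ Q)`, then `ν_j(Q * (f /ₘ Q)) = ν_j(f)` would
make `Q` stable. -/
theorem exists_v_lt_of_v_lt (hμ : IsLimitAugmentation ν Q γ μ) {f : K[X]} {i : ι}
    (h : (ν i).v f < μ.v f) : ∃ j, (ν i).v f < (ν j).v f := by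
  by_contra! hmax
  have hr := degree_modByMonic_lt f hμ.monic
  have hμr : μ.v f ≤ μ.v (f %ₘ Q) := by
    rw [hμ.v_modByMonic_add_divByMonic f]
    exact min_le_left _ _
  refine hμ.not_stable (stable_of_eventually_v_mul_eq hμ.mono (g := f /ₘ Q) (ne_top_of_lt h) ?_)
  filter_upwards [eventually_ge_atTop i, hμ.eventually_v_eq_of_degree_lt hr] with j hij hj
  have hfj : (ν j).v f = (ν i).v f := le_antisymm (hmax j) (hμ.mono i j hij f)
  have hlt : (ν j).v f < (ν j).v (-(f %ₘ Q)) := by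
    rw [(ν j).v_neg, ← hj, hfj]
    exact h.trans_le hμr
  have hQg : Q * (f /ₘ Q) = f + -(f %ₘ Q) := by
    rw [← sub_eq_add_neg, eq_sub_iff_add_eq', modByMonic_add_div]
  rw [hQg, (ν j).v_add_eq_left hlt, hfj]

theorem initialForm_eq_initialForm_modByMonic (hμ : IsLimitAugmentation ν Q γ μ) {f : K[X]}
    {i : ι} (hf : (ν i).v f = μ.v f) : initialForm μ f = initialForm μ (f %ₘ Q) := by
  have hr := degree_modByMonic_lt f hμ.monic
  have hμf := hμ.v_modByMonic_add_divByMonic f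
  by_cases htop : μ.v f = ⊤
  · have hμr : μ.v (f %ₘ Q) = ⊤ := top_le_iff.1 (htop ▸ hμf ▸ min_le_left _ _)
    rw [initialForm_of_v_eq_top μ htop, initialForm_of_v_eq_top μ hμr]
  have hQg : Q * (f /ₘ Q) = f - f %ₘ Q := eq_sub_iff_add_eq'.2 (modByMonic_add_div f Q)
  have hlt : μ.v f < γ + μ.v (f /ₘ Q) := by
    refine lt_of_le_of_ne (hμf ▸ min_le_right _ _) fun heq => ?_
    obtain ⟨j, hij, hj⟩ :=
      ((eventually_ge_atTop i).and (hμ.eventually_v_eq_of_degree_lt hr)).exists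
    have hg : (ν j).v (f /ₘ Q) ≠ ⊤ :=
      ne_top_of_le_ne_top (WithTop.add_ne_top.1 (heq ▸ htop)).2 (hμ.v_le j _)
    have hQg_lt : (ν j).v (Q * (f /ₘ Q)) < μ.v f := by
      rw [(ν j).v_mul, heq]
      exact WithTop.add_lt_add_of_lt_of_le hg (hμ.v_Q_lt j) (hμ.v_le j _)
    have hfj : (ν j).v f = (ν j).v (Q * (f /ₘ Q)) := by
      conv_lhs => rw [← modByMonic_add_div f Q, add_comm]
      refine (ν j).v_add_eq_left (hQg_lt.trans_le ?_)
      rw [← hj, hμf]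
      exact min_le_left _ _
    exact hQg_lt.not_ge (hf.symm.trans_le ((hμ.mono i j hij f).trans hfj.le))
  have hμr : μ.v f = μ.v (f %ₘ Q) := by
    rw [hμf] at hlt ⊢
    exact min_eq_left ((min_lt_iff.1 hlt).resolve_right (lt_irrefl _)).le
  refine initialForm_eq_of_v_lt_v_sub μ hμr ?_
  rwa [← hQg, μ.v_mul, hμ.v_Q]

theorem setOf_initialForm_degree_lt (hμ : IsLimitAugmentation ν Q γ μ) :
    {x | ∃ f, f.degree < Q.degree ∧ x = initialForm μ f} =
      {x | ∃ f i, (ν i).v f = μ.v f ∧ x = initialForm μ f} := by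
  ext x
  constructor
  · rintro ⟨f, hf, rfl⟩
    obtain ⟨i, hi⟩ := (hμ.eventually_v_eq_of_degree_lt hf).exists
    exact ⟨f, i, hi.symm, rfl⟩
  · rintro ⟨f, i, hf, rfl⟩
    exact ⟨f %ₘ Q, degree_modByMonic_lt f hμ.monic,
      hμ.initialForm_eq_initialForm_modByMonic hf⟩

end IsLimitAugmentation

end LimitAugmentation

theorem directLimit_iso_RQ_general
    {K : Type*} [Field K] {Γ : Type*} [AddCommGroup Γ] [LinearOrder Γ] [IsOrderedAddMonoid Γ]
    {I : Type*} [LinearOrder I] [Nonempty I]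
    (ν : I → ValOn (Polynomial K) Γ)
    (hmono : ∀ i j : I, i ≤ j → ∀ f : Polynomial K, (ν i).v f ≤ (ν j).v f)
    (Q : Polynomial K) (hQmonic : Q.Monic) (hQns : ¬ Stable ν Q)
    (γ : WithTop Γ) (hγ : ∀ i : I, (ν i).v Q < γ)
    (μ : ValOn (Polynomial K) Γ)
    (hμ : ∀ (f : Polynomial K) (r : ℕ) (c : ℕ → Polynomial K),
      f = ∑ j ∈ Finset.range (r + 1), c j * Q ^ j →
      (∀ j : ℕ, (c j).degree < Q.degree) →
      ∃ i₀ : I, ∀ i : I, i₀ ≤ i →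
        μ.v f = (Finset.range (r + 1)).inf' Finset.nonempty_range_add_one
          (fun j => (ν i).v (c j) + j • γ)) :
    ∃ S : Subring (Graded μ),
      (S : Set (Graded μ)) =
        ↑(AddSubgroup.closure
          {x : Graded μ | ∃ f : Polynomial K, f.degree < Q.degree ∧ x = initialForm μ f}) ∧
      Nonempty ((Ring.DirectLimit (fun i => Graded (ν i))
        (fun i j h => ⇑(phi (ν i) (ν j) (hmono i j h)))) ≃+* S) := by
  have haug : IsLimitAugmentation ν Q γ μ := ⟨hmono, hQmonic, hQns, hγ, hμ⟩
  have hinj := limitHom_injective ν μ hmono haug.v_le fun _ _ => haug.exists_v_lt_of_v_lt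
  refine ⟨(limitHom ν μ hmono haug.v_le).range, ?_,
    ⟨RingEquiv.ofLeftInverse (Function.leftInverse_invFun hinj)⟩⟩
  rw [haug.setOf_initialForm_degree_lt, ← range_limitHom]
  rfl

/-- In the third case, `lim→ G_{ν_i} ≅ R_Q`, where `R_Q` is the
additive subgroup of `G_μ` generated by `{inv_μ(f) : deg f < d = deg Q}` (a subring of
`G_μ`, since `Q` is a key polynomial for `μ`). -/
theorem directLimit_iso_RQ
    {K : Type*} [Field K] {Γ : Type*} [AddCommGroup Γ] [LinearOrder Γ] [IsOrderedAddMonoid Γ]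
    {I : Type*} [LinearOrder I] [Nonempty I]
    (ν₀ : ValOn K Γ) (ν : I → ValOn (Polynomial K) Γ)
    (hext : ∀ (i : I) (a : K), (ν i).v (Polynomial.C a) = ν₀.v a)
    (hmono : ∀ i j : I, i ≤ j → ∀ f : Polynomial K, (ν i).v f ≤ (ν j).v f)
    (hstrict : ∀ i j : I, i < j → ∃ f : Polynomial K, (ν i).v f < (ν j).v f)
    (hnomax : ∀ i : I, ∃ j : I, i < j)
    (Q : Polynomial K) (hQmonic : Q.Monic) (hQns : ¬ Stable ν Q)
    (hQmin : ∀ g : Polynomial K, ¬ Stable ν g → Q.degree ≤ g.degree)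
    (γ : WithTop Γ) (hγ : ∀ i : I, (ν i).v Q < γ)
    (μ : ValOn (Polynomial K) Γ)
    (hμext : ∀ a : K, μ.v (Polynomial.C a) = ν₀.v a)
    (hμ : ∀ (f : Polynomial K) (r : ℕ) (c : ℕ → Polynomial K),
      f = ∑ j ∈ Finset.range (r + 1), c j * Q ^ j →
      (∀ j : ℕ, (c j).degree < Q.degree) →
      ∃ i₀ : I, ∀ i : I, i₀ ≤ i →
        μ.v f = (Finset.range (r + 1)).inf' Finset.nonempty_range_add_one
          (fun j => (ν i).v (c j) + j • γ)) :
    ∃ S : Subring (Graded μ),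
      (S : Set (Graded μ)) =
        ↑(AddSubgroup.closure
          {x : Graded μ | ∃ f : Polynomial K, f.degree < Q.degree ∧ x = initialForm μ f}) ∧
      Nonempty ((Ring.DirectLimit (fun i => Graded (ν i))
        (fun i j h => ⇑(phi (ν i) (ν j) (hmono i j h)))) ≃+* S) :=
  directLimit_iso_RQ_general ν hmono Q hQmonic hQns γ hγ μ hμ
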